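/- Under the generalized β-conformal change L̄(y) = f(e^σ·L(y), β(y)), the transformed Cartan tensor satisfies, at every y ∈ Ω and for all indices i, j, k: C̄_{ijk} = e^σ·p·C_{ijk} + V_{ijk}, where V_{ijk} = (e^σ·p₋₁/2)·(h_{ij}·m_k + h_{jk}·m_i + h_{ki}·m_j) + (p₀₂/2)·m_i·m_j·m_k. -/

import Mathlib

open Real

noncomputable section

/-- Partial derivative of `f : ℝ × ℝ → ℝ` with respect to its first argument. -/
def pds (f : ℝ × ℝ → ℝ) (x : ℝ × ℝ) : ℝ := fderiv ℝ f x (1, 0)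

/-- Partial derivative of `f : ℝ × ℝ → ℝ` with respect to its second argument. -/
def pdt (f : ℝ × ℝ → ℝ) (x : ℝ × ℝ) : ℝ := fderiv ℝ f x (0, 1)

/-- Partial derivative with respect to the i-th coordinate `yⁱ`. -/
def pdi {n : ℕ} (F : (Fin n → ℝ) → ℝ) (i : Fin n) (y : Fin n → ℝ) : ℝ :=
  fderiv ℝ F y (Pi.single i 1)

/-- Finsler metric tensor g_{ij} = (1/2)·∂²(L²)/∂yⁱ∂yʲ. -/
def gmet {n : ℕ} (L : (Fin n → ℝ) → ℝ) (y : Fin n → ℝ) (i j : Fin n) : ℝ :=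
  (1 / 2) * pdi (pdi (fun w => (L w) ^ 2) i) j y

/-- Normalized supporting element l_i = ∂L/∂yⁱ. -/
def lvec {n : ℕ} (L : (Fin n → ℝ) → ℝ) (y : Fin n → ℝ) (i : Fin n) : ℝ := pdi L i y

/-- y_i = g_{ij}·yʲ. -/
def ylow {n : ℕ} (L : (Fin n → ℝ) → ℝ) (y : Fin n → ℝ) (i : Fin n) : ℝ :=
  ∑ j, gmet L y i j * y j

/-- Angular metric tensor h_{ij} = g_{ij} − l_i·l_j. -/
def hmet {n : ℕ} (L : (Fin n → ℝ) → ℝ) (y : Fin n → ℝ) (i j : Fin n) : ℝ :=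
  gmet L y i j - lvec L y i * lvec L y j

/-- Cartan tensor C_{ijk} = (1/4)·∂³(L²)/∂yⁱ∂yʲ∂yᵏ. -/
def cartan {n : ℕ} (L : (Fin n → ℝ) → ℝ) (y : Fin n → ℝ) (i j k : Fin n) : ℝ :=
  (1 / 4) * pdi (pdi (pdi (fun w => (L w) ^ 2) i) j) k y

/-- β(y) = b_i·yⁱ. -/
def betaf {n : ℕ} (b : Fin n → ℝ) (y : Fin n → ℝ) : ℝ := ∑ i, b i * y i

/-- m_i = b_i − (β/L²)·y_i. -/
def mvec {n : ℕ} (L : (Fin n → ℝ) → ℝ) (b : Fin n → ℝ) (y : Fin n → ℝ) (i : Fin n) : ℝ :=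
  b i - (betaf b y / (L y) ^ 2) * ylow L y i

/-- The evaluation point (e^σ·L(y), β(y)). -/
def basept {n : ℕ} (L : (Fin n → ℝ) → ℝ) (b : Fin n → ℝ) (σ : ℝ) (y : Fin n → ℝ) : ℝ × ℝ :=
  (Real.exp σ * L y, betaf b y)

/-- q = f·f₂ evaluated at (e^σ·L(y), β(y)). -/
def qfun {n : ℕ} (f : ℝ × ℝ → ℝ) (L : (Fin n → ℝ) → ℝ) (b : Fin n → ℝ) (σ : ℝ)
    (y : Fin n → ℝ) : ℝ :=
  f (basept L b σ y) * pdt f (basept L b σ y)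

/-- p = f·f₁/L evaluated at (e^σ·L(y), β(y)). -/
def pfun {n : ℕ} (f : ℝ × ℝ → ℝ) (L : (Fin n → ℝ) → ℝ) (b : Fin n → ℝ) (σ : ℝ)
    (y : Fin n → ℝ) : ℝ :=
  f (basept L b σ y) * pds f (basept L b σ y) / L y

/-- q₀ = f·f₂₂ evaluated at (e^σ·L(y), β(y)). -/
def q0fun {n : ℕ} (f : ℝ × ℝ → ℝ) (L : (Fin n → ℝ) → ℝ) (b : Fin n → ℝ) (σ : ℝ)
    (y : Fin n → ℝ) : ℝ :=
  f (basept L b σ y) * pdt (pdt f) (basept L b σ y)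

/-- p₀ = f₂² + q₀ evaluated at (e^σ·L(y), β(y)). -/
def p0fun {n : ℕ} (f : ℝ × ℝ → ℝ) (L : (Fin n → ℝ) → ℝ) (b : Fin n → ℝ) (σ : ℝ)
    (y : Fin n → ℝ) : ℝ :=
  (pdt f (basept L b σ y)) ^ 2 + q0fun f L b σ y

/-- q₋₁ = f·f₁₂/L evaluated at (e^σ·L(y), β(y)). -/
def qm1fun {n : ℕ} (f : ℝ × ℝ → ℝ) (L : (Fin n → ℝ) → ℝ) (b : Fin n → ℝ) (σ : ℝ)
    (y : Fin n → ℝ) : ℝ :=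
  f (basept L b σ y) * pdt (pds f) (basept L b σ y) / L y

/-- p₋₁ = q₋₁ + p·f₂/f evaluated at (e^σ·L(y), β(y)). -/
def pm1fun {n : ℕ} (f : ℝ × ℝ → ℝ) (L : (Fin n → ℝ) → ℝ) (b : Fin n → ℝ) (σ : ℝ)
    (y : Fin n → ℝ) : ℝ :=
  qm1fun f L b σ y + pfun f L b σ y * pdt f (basept L b σ y) / f (basept L b σ y)

/-- q₋₂ = f·(e^σ·f₁₁ − f₁/L)/L² evaluated at (e^σ·L(y), β(y)). -/
def qm2fun {n : ℕ} (f : ℝ × ℝ → ℝ) (L : (Fin n → ℝ) → ℝ) (b : Fin n → ℝ) (σ : ℝ)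
    (y : Fin n → ℝ) : ℝ :=
  f (basept L b σ y) *
    (Real.exp σ * pds (pds f) (basept L b σ y) - pds f (basept L b σ y) / L y) / (L y) ^ 2

/-- p₋₂ = q₋₂ + e^σ·p²/f² evaluated at (e^σ·L(y), β(y)). -/
def pm2fun {n : ℕ} (f : ℝ × ℝ → ℝ) (L : (Fin n → ℝ) → ℝ) (b : Fin n → ℝ) (σ : ℝ)
    (y : Fin n → ℝ) : ℝ :=
  qm2fun f L b σ y + Real.exp σ * (pfun f L b σ y) ^ 2 / (f (basept L b σ y)) ^ 2

/-- p₀₂ = ∂(f₂² + f·f₂₂)/∂t evaluated at (e^σ·L(y), β(y)). -/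
def p02fun {n : ℕ} (f : ℝ × ℝ → ℝ) (L : (Fin n → ℝ) → ℝ) (b : Fin n → ℝ) (σ : ℝ)
    (y : Fin n → ℝ) : ℝ :=
  pdt (fun x => (pdt f x) ^ 2 + f x * pdt (pdt f) x) (basept L b σ y)

/-- The transformed Finsler function L̄(y) = f(e^σ·L(y), β(y)). -/
def Lbar {n : ℕ} (f : ℝ × ℝ → ℝ) (L : (Fin n → ℝ) → ℝ) (b : Fin n → ℝ) (σ : ℝ)
    (y : Fin n → ℝ) : ℝ :=
  f (basept L b σ y)

/-- bⁱ = g^{ij}·b_j. -/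
def bup {n : ℕ} (ginv : (Fin n → ℝ) → Fin n → Fin n → ℝ) (b : Fin n → ℝ)
    (y : Fin n → ℝ) (i : Fin n) : ℝ :=
  ∑ j, ginv y i j * b j

/-- b² = g^{ij}·b_i·b_j. -/
def bsq {n : ℕ} (ginv : (Fin n → ℝ) → Fin n → Fin n → ℝ) (b : Fin n → ℝ)
    (y : Fin n → ℝ) : ℝ :=
  ∑ i, ∑ j, ginv y i j * b i * b j

/-- m² = g^{ij}·m_i·m_j. -/
def msq {n : ℕ} (L : (Fin n → ℝ) → ℝ) (ginv : (Fin n → ℝ) → Fin n → Fin n → ℝ)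
    (b : Fin n → ℝ) (y : Fin n → ℝ) : ℝ :=
  ∑ i, ∑ j, ginv y i j * mvec L b y i * mvec L b y j

/-- mⁱ = g^{ij}·m_j. -/
def mup {n : ℕ} (L : (Fin n → ℝ) → ℝ) (ginv : (Fin n → ℝ) → Fin n → Fin n → ℝ)
    (b : Fin n → ℝ) (y : Fin n → ℝ) (i : Fin n) : ℝ :=
  ∑ j, ginv y i j * mvec L b y j

/-- hⁱ_j = g^{ir}·h_{rj}. -/
def hup {n : ℕ} (L : (Fin n → ℝ) → ℝ) (ginv : (Fin n → ℝ) → Fin n → Fin n → ℝ)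
    (y : Fin n → ℝ) (i j : Fin n) : ℝ :=
  ∑ r, ginv y i r * hmet L y r j

/-- ε = f²·(e^σ·p + m²·q₀)/L². -/
def epsfun {n : ℕ} (f : ℝ × ℝ → ℝ) (L : (Fin n → ℝ) → ℝ)
    (ginv : (Fin n → ℝ) → Fin n → Fin n → ℝ) (b : Fin n → ℝ) (σ : ℝ) (y : Fin n → ℝ) : ℝ :=
  (f (basept L b σ y)) ^ 2 *
    (Real.exp σ * pfun f L b σ y + msq L ginv b y * q0fun f L b σ y) / (L y) ^ 2

/-- s₀ = e^{−σ}·f²·q₀/(ε·p·L²). -/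
def s0fun {n : ℕ} (f : ℝ × ℝ → ℝ) (L : (Fin n → ℝ) → ℝ)
    (ginv : (Fin n → ℝ) → Fin n → Fin n → ℝ) (b : Fin n → ℝ) (σ : ℝ) (y : Fin n → ℝ) : ℝ :=
  Real.exp (-σ) * (f (basept L b σ y)) ^ 2 * q0fun f L b σ y /
    (epsfun f L ginv b σ y * pfun f L b σ y * (L y) ^ 2)

/-- s₋₁ = p₋₁·f²/(ε·p·L²). -/
def sm1fun {n : ℕ} (f : ℝ × ℝ → ℝ) (L : (Fin n → ℝ) → ℝ)
    (ginv : (Fin n → ℝ) → Fin n → Fin n → ℝ) (b : Fin n → ℝ) (σ : ℝ) (y : Fin n → ℝ) : ℝ :=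
  pm1fun f L b σ y * (f (basept L b σ y)) ^ 2 /
    (epsfun f L ginv b σ y * pfun f L b σ y * (L y) ^ 2)

/-- s₋₂ = p₋₁·(e^σ·m²·p·L² − b²·f²)/(ε·p·β·L²). -/
def sm2fun {n : ℕ} (f : ℝ × ℝ → ℝ) (L : (Fin n → ℝ) → ℝ)
    (ginv : (Fin n → ℝ) → Fin n → Fin n → ℝ) (b : Fin n → ℝ) (σ : ℝ) (y : Fin n → ℝ) : ℝ :=
  pm1fun f L b σ y *
    (Real.exp σ * msq L ginv b y * pfun f L b σ y * (L y) ^ 2 -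
      bsq ginv b y * (f (basept L b σ y)) ^ 2) /
    (epsfun f L ginv b σ y * pfun f L b σ y * betaf b y * (L y) ^ 2)

/-- ḡ^{ij} = (e^{−σ}/p)·g^{ij} − s₀·bⁱ·bʲ − s₋₁·(yⁱ·bʲ + yʲ·bⁱ) − s₋₂·yⁱ·yʲ. -/
def gbarinv {n : ℕ} (f : ℝ × ℝ → ℝ) (L : (Fin n → ℝ) → ℝ)
    (ginv : (Fin n → ℝ) → Fin n → Fin n → ℝ) (b : Fin n → ℝ) (σ : ℝ) (y : Fin n → ℝ)
    (i j : Fin n) : ℝ :=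
  (Real.exp (-σ) / pfun f L b σ y) * ginv y i j
    - s0fun f L ginv b σ y * bup ginv b y i * bup ginv b y j
    - sm1fun f L ginv b σ y * (y i * bup ginv b y j + y j * bup ginv b y i)
    - sm2fun f L ginv b σ y * y i * y j

/-! ### Auxiliary machinery -/

section AuxLemmas
variable {E' : Type*} [NormedAddCommGroup E'] [NormedSpace ℝ E']

lemma fderiv_congr_open {F G : E' → ℝ} {s : Set E'} (hs : IsOpen s) {y : E'}
    (hy : y ∈ s) (h : ∀ w ∈ s, F w = G w) : fderiv ℝ F y = fderiv ℝ G y :=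
  Filter.EventuallyEq.fderiv_eq (Filter.eventuallyEq_of_mem (hs.mem_nhds hy) h)

lemma contDiffOn_fderiv_apply {F : E' → ℝ} {s : Set E'} (hF : ContDiffOn ℝ (⊤ : ℕ∞) F s)
    (hs : IsOpen s) (v : E') : ContDiffOn ℝ (⊤ : ℕ∞) (fun w => fderiv ℝ F w v) s :=
  (hF.fderiv_of_isOpen hs (by simp)).clm_apply contDiffOn_const

lemma diffAt_of_cdOn {F : E' → ℝ} {s : Set E'} (hF : ContDiffOn ℝ (⊤ : ℕ∞) F s) (hs : IsOpen s)
    {y : E'} (hy : y ∈ s) : DifferentiableAt ℝ F y :=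
  (hF.contDiffAt (hs.mem_nhds hy)).differentiableAt (by simp)

lemma fderiv_apply_add {F G : E' → ℝ} {y : E'} (hF : DifferentiableAt ℝ F y)
    (hG : DifferentiableAt ℝ G y) (v : E') :
    fderiv ℝ (fun w => F w + G w) y v = fderiv ℝ F y v + fderiv ℝ G y v := by
  rw [fderiv_fun_add hF hG]; simp

lemma fderiv_apply_mul {F G : E' → ℝ} {y : E'} (hF : DifferentiableAt ℝ F y)
    (hG : DifferentiableAt ℝ G y) (v : E') :
    fderiv ℝ (fun w => F w * G w) y v
      = fderiv ℝ F y v * G y + F y * fderiv ℝ G y v := by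
  rw [fderiv_fun_mul hF hG]
  simp only [ContinuousLinearMap.add_apply, ContinuousLinearMap.smul_apply, smul_eq_mul]
  ring

lemma fderiv_apply_const_mul {F : E' → ℝ} {y : E'} (hF : DifferentiableAt ℝ F y)
    (c : ℝ) (v : E') :
    fderiv ℝ (fun w => c * F w) y v = c * fderiv ℝ F y v := by
  rw [fderiv_const_mul hF]; simp

lemma fderiv_apply_mul_const {F : E' → ℝ} {y : E'} (hF : DifferentiableAt ℝ F y)
    (c : ℝ) (v : E') :
    fderiv ℝ (fun w => F w * c) y v = fderiv ℝ F y v * c := by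
  rw [fderiv_mul_const hF]; simp [mul_comm]

lemma euler_deg {A : E' → ℝ} {s : Set E'} (hs : IsOpen s)
    (hA : ∀ y ∈ s, DifferentiableAt ℝ A y) (d : ℕ)
    (hhom : ∀ lam : ℝ, 0 < lam → ∀ x ∈ s, A (lam • x) = lam ^ d * A x)
    {x : E'} (hx : x ∈ s) : fderiv ℝ A x x = d * A x := by
  have hsm : HasDerivAt (fun lam : ℝ => lam • x) x 1 := by
    simpa using (hasDerivAt_id (1:ℝ)).smul_const x
  have h1 : HasDerivAt (fun lam : ℝ => A (lam • x)) (fderiv ℝ A x x) 1 := by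
    have hx1 : (1:ℝ) • x = x := one_smul ℝ x
    have hAd : HasFDerivAt A (fderiv ℝ A x) ((fun lam : ℝ => lam • x) 1) := by
      simpa [hx1] using (hA x hx).hasFDerivAt
    exact hAd.comp_hasDerivAt 1 hsm
  have h3 : HasDerivAt (fun lam : ℝ => lam ^ d * A x) ((d : ℝ) * A x) 1 := by
    simpa using (hasDerivAt_pow d (1:ℝ)).mul_const (A x)
  have h2 : (fun lam : ℝ => lam ^ d * A x) =ᶠ[nhds (1:ℝ)] fun lam => A (lam • x) := by
    filter_upwards [eventually_gt_nhds (zero_lt_one (α := ℝ))] with lam hlam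
    exact (hhom lam hlam x hx).symm
  exact ((h3.congr_of_eventuallyEq h2.symm).unique h1).symm

lemma hom_fderiv {A : E' → ℝ} {s : Set E'} (hs : IsOpen s)
    (hA : ∀ y ∈ s, DifferentiableAt ℝ A y) (d : ℕ)
    (hcone : ∀ lam : ℝ, 0 < lam → ∀ x ∈ s, lam • x ∈ s)
    (hhom : ∀ lam : ℝ, 0 < lam → ∀ x ∈ s, A (lam • x) = lam ^ d * A x)
    {lam : ℝ} (hlam : 0 < lam) {x : E'} (hx : x ∈ s) (v : E') :
    lam * fderiv ℝ A (lam • x) v = lam ^ d * fderiv ℝ A x v := by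
  have hmap : HasFDerivAt (fun w : E' => lam • w) (lam • ContinuousLinearMap.id ℝ E') x := by
    exact (hasFDerivAt_id x).const_smul lam
  have h1 : HasFDerivAt (fun w => A (lam • w))
      ((fderiv ℝ A (lam • x)).comp (lam • ContinuousLinearMap.id ℝ E')) x :=
    (hA _ (hcone lam hlam x hx)).hasFDerivAt.comp x hmap
  have h2 : HasFDerivAt (fun w => lam ^ d * A w) (lam ^ d • fderiv ℝ A x) x :=
    (hA x hx).hasFDerivAt.const_mul _
  have heq : (fun w => lam ^ d * A w) =ᶠ[nhds x] (fun w => A (lam • w)) := by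
    filter_upwards [hs.mem_nhds hx] with w hw
    exact (hhom lam hlam w hw).symm
  have h3 := (h2.congr_of_eventuallyEq heq.symm).unique h1
  have h4 := congrArg (fun T : E' →L[ℝ] ℝ => T v) h3
  simpa [mul_comm] using h4.symm

lemma symm_second {F : E' → ℝ} {s : Set E'} (hs : IsOpen s) (hF : ContDiffOn ℝ (⊤ : ℕ∞) F s)
    {x : E'} (hx : x ∈ s) (v w : E') :
    fderiv ℝ (fun z => fderiv ℝ F z v) x w = fderiv ℝ (fun z => fderiv ℝ F z w) x v := by
  have hct : ContDiffAt ℝ (⊤ : ℕ∞) F x := hF.contDiffAt (hs.mem_nhds hx)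
  have hsymm := hct.isSymmSndFDerivAt (by rw [minSmoothness_of_isRCLikeNormedField]; exact WithTop.coe_le_coe.mpr le_top)
  have hd : DifferentiableAt ℝ (fderiv ℝ F) x :=
    (hct.fderiv_right (m := (⊤ : ℕ∞)) (by simp)).differentiableAt (by simp)
  have h1 : ∀ u : E', fderiv ℝ (fun z => fderiv ℝ F z u) x
      = (fderiv ℝ (fderiv ℝ F) x).flip u := by
    intro u
    rw [fderiv_clm_apply hd (differentiableAt_const u)]
    simp
  rw [h1 v, h1 w]
  simpa using hsymm w v

end AuxLemmas

section PdiWrappers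
variable {n : ℕ}

lemma pdi_congr_open {F G : (Fin n → ℝ) → ℝ} {s : Set (Fin n → ℝ)} (hs : IsOpen s)
    {y : Fin n → ℝ} (hy : y ∈ s) (h : ∀ w ∈ s, F w = G w) (i : Fin n) :
    pdi F i y = pdi G i y := by
  unfold pdi; rw [fderiv_congr_open hs hy h]

lemma pdi_add {F G : (Fin n → ℝ) → ℝ} {y : Fin n → ℝ} (hF : DifferentiableAt ℝ F y)
    (hG : DifferentiableAt ℝ G y) (i : Fin n) :
    pdi (fun w => F w + G w) i y = pdi F i y + pdi G i y :=
  fderiv_apply_add hF hG _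

lemma pdi_mul {F G : (Fin n → ℝ) → ℝ} {y : Fin n → ℝ} (hF : DifferentiableAt ℝ F y)
    (hG : DifferentiableAt ℝ G y) (i : Fin n) :
    pdi (fun w => F w * G w) i y = pdi F i y * G y + F y * pdi G i y :=
  fderiv_apply_mul hF hG _

lemma pdi_const_mul {F : (Fin n → ℝ) → ℝ} {y : Fin n → ℝ} (hF : DifferentiableAt ℝ F y)
    (c : ℝ) (i : Fin n) :
    pdi (fun w => c * F w) i y = c * pdi F i y :=
  fderiv_apply_const_mul hF c _

lemma pdi_mul_const {F : (Fin n → ℝ) → ℝ} {y : Fin n → ℝ} (hF : DifferentiableAt ℝ F y)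
    (c : ℝ) (i : Fin n) :
    pdi (fun w => F w * c) i y = pdi F i y * c :=
  fderiv_apply_mul_const hF c _

lemma fderiv_pi_split {n : ℕ} (F : (Fin n → ℝ) → ℝ) (y z : Fin n → ℝ) :
    fderiv ℝ F y z = ∑ j, z j * pdi F j y := by
  have hz : z = ∑ j, z j • (Pi.single j 1 : Fin n → ℝ) := by
    funext t
    simp [Finset.sum_apply, Pi.single_apply]
  conv_lhs => rw [hz]
  rw [map_sum]
  simp only [map_smul, smul_eq_mul, pdi]

end PdiWrappers

section PdtWrappers

lemma pdt_add {F G : ℝ × ℝ → ℝ} {x : ℝ × ℝ} (hF : DifferentiableAt ℝ F x)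
    (hG : DifferentiableAt ℝ G x) :
    pdt (fun z => F z + G z) x = pdt F x + pdt G x :=
  fderiv_apply_add hF hG _

lemma pdt_mul {F G : ℝ × ℝ → ℝ} {x : ℝ × ℝ} (hF : DifferentiableAt ℝ F x)
    (hG : DifferentiableAt ℝ G x) :
    pdt (fun z => F z * G z) x = pdt F x * G x + F x * pdt G x :=
  fderiv_apply_mul hF hG _

lemma fderiv_plane_split (F : ℝ × ℝ → ℝ) (x z : ℝ × ℝ) :
    fderiv ℝ F x z = z.1 * pds F x + z.2 * pdt F x := by
  obtain ⟨a, c⟩ := z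
  have hz : ((a, c) : ℝ × ℝ) = a • ((1:ℝ), (0:ℝ)) + c • ((0:ℝ), (1:ℝ)) := by
    simp [Prod.ext_iff]
  rw [hz, map_add, map_smul, map_smul]
  simp [pds, pdt, smul_eq_mul]

end PdtWrappers

/-- A square helper. -/
def Gsq (f : ℝ × ℝ → ℝ) : ℝ × ℝ → ℝ := fun x => f x * f x

def Bclm {n : ℕ} (b : Fin n → ℝ) : (Fin n → ℝ) →L[ℝ] ℝ :=
  ∑ j, b j • (ContinuousLinearMap.proj j : (Fin n → ℝ) →L[ℝ] ℝ)

lemma Bclm_apply {n : ℕ} (b y : Fin n → ℝ) : Bclm b y = betaf b y := by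
  simp [Bclm, betaf, ContinuousLinearMap.sum_apply, ContinuousLinearMap.proj_apply,
    smul_eq_mul]

lemma Bclm_single {n : ℕ} (b : Fin n → ℝ) (i : Fin n) : Bclm b (Pi.single i 1) = b i := by
  simp [Bclm, ContinuousLinearMap.sum_apply, ContinuousLinearMap.proj_apply,
    Pi.single_apply, smul_eq_mul]

lemma hasFDerivAt_basept {n : ℕ} {L : (Fin n → ℝ) → ℝ} (b : Fin n → ℝ) (σ : ℝ)
    {y : Fin n → ℝ} (hL : DifferentiableAt ℝ L y) :
    HasFDerivAt (basept L b σ) ((Real.exp σ • fderiv ℝ L y).prod (Bclm b)) y := by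
  have h1 : HasFDerivAt (fun w => Real.exp σ * L w) (Real.exp σ • fderiv ℝ L y) y :=
    hL.hasFDerivAt.const_mul _
  have h2 : HasFDerivAt (betaf b) (Bclm b) y := by
    have he : betaf b = fun z => Bclm b z := by funext z; rw [Bclm_apply]
    rw [he]; exact (Bclm b).hasFDerivAt
  exact h1.prodMk h2

lemma pdi_comp_basept {n : ℕ} {L : (Fin n → ℝ) → ℝ} {b : Fin n → ℝ} {σ : ℝ}
    {A : ℝ × ℝ → ℝ} {y : Fin n → ℝ} (hL : DifferentiableAt ℝ L y)
    (hA : DifferentiableAt ℝ A (basept L b σ y)) (i : Fin n) :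
    pdi (fun w => A (basept L b σ w)) i y
      = pds A (basept L b σ y) * (Real.exp σ * pdi L i y)
        + pdt A (basept L b σ y) * b i := by
  have hB := hasFDerivAt_basept b σ hL
  have hc : fderiv ℝ (fun w => A (basept L b σ w)) y
      = (fderiv ℝ A (basept L b σ y)).comp
          ((Real.exp σ • fderiv ℝ L y).prod (Bclm b)) :=
    (hA.hasFDerivAt.comp y hB).fderiv
  unfold pdi
  rw [hc]
  simp only [ContinuousLinearMap.coe_comp', Function.comp_apply,
    ContinuousLinearMap.prod_apply, ContinuousLinearMap.smul_apply, smul_eq_mul]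
  rw [fderiv_plane_split, Bclm_single]
  ring

lemma contDiffOn_comp_basept {n : ℕ} {Ω : Set (Fin n → ℝ)} {L : (Fin n → ℝ) → ℝ}
    (hL : ContDiffOn ℝ (⊤ : ℕ∞) L Ω) (hLpos : ∀ y ∈ Ω, 0 < L y) (b : Fin n → ℝ) (σ : ℝ)
    {A : ℝ × ℝ → ℝ} (hA : ContDiffOn ℝ (⊤ : ℕ∞) A {x : ℝ × ℝ | 0 < x.1}) :
    ContDiffOn ℝ (⊤ : ℕ∞) (fun w => A (basept L b σ w)) Ω := by
  have hb : ContDiffOn ℝ (⊤ : ℕ∞) (basept L b σ) Ω := by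
    apply ContDiffOn.prodMk (contDiffOn_const.mul hL)
    have he : betaf b = fun z => Bclm b z := by funext z; rw [Bclm_apply]
    exact he ▸ (Bclm b).contDiff.contDiffOn
  exact hA.comp hb fun w hw => by
    simp only [basept, Set.mem_setOf_eq]
    exact mul_pos (Real.exp_pos σ) (hLpos w hw)

section Derivs
variable {n : ℕ} {Ω : Set (Fin n → ℝ)} {L : (Fin n → ℝ) → ℝ} {b : Fin n → ℝ} {σ : ℝ}

lemma d1_lemma (hΩopen : IsOpen Ω) (hL : ContDiffOn ℝ (⊤ : ℕ∞) L Ω)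
    (hLpos : ∀ y ∈ Ω, 0 < L y) {A : ℝ × ℝ → ℝ}
    (hA : ContDiffOn ℝ (⊤ : ℕ∞) A {x : ℝ × ℝ | 0 < x.1}) :
    ∀ w ∈ Ω, ∀ i : Fin n,
      pdi (fun z => A (basept L b σ z)) i w
        = pds A (basept L b σ w) * (Real.exp σ * pdi L i w)
          + pdt A (basept L b σ w) * b i := by
  intro w hw i
  have hmem : basept L b σ w ∈ {x : ℝ × ℝ | 0 < x.1} := by
    simp only [basept, Set.mem_setOf_eq]
    exact mul_pos (Real.exp_pos σ) (hLpos w hw)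
  exact pdi_comp_basept (diffAt_of_cdOn hL hΩopen hw)
    (diffAt_of_cdOn hA (isOpen_lt continuous_const continuous_fst) hmem) i

lemma d2_lemma (hΩopen : IsOpen Ω) (hL : ContDiffOn ℝ (⊤ : ℕ∞) L Ω)
    (hLpos : ∀ y ∈ Ω, 0 < L y) {A : ℝ × ℝ → ℝ}
    (hA : ContDiffOn ℝ (⊤ : ℕ∞) A {x : ℝ × ℝ | 0 < x.1}) :
    ∀ w ∈ Ω, ∀ i j : Fin n,
      pdi (pdi (fun z => A (basept L b σ z)) i) j w
        = (pds (pds A) (basept L b σ w) * (Real.exp σ * pdi L j w)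
            + pdt (pds A) (basept L b σ w) * b j) * (Real.exp σ * pdi L i w)
          + pds A (basept L b σ w) * (Real.exp σ * pdi (pdi L i) j w)
          + (pds (pdt A) (basept L b σ w) * (Real.exp σ * pdi L j w)
            + pdt (pdt A) (basept L b σ w) * b j) * b i := by
  intro w hw i j
  have openH : IsOpen {x : ℝ × ℝ | 0 < x.1} := isOpen_lt continuous_const continuous_fst
  have hA1 : ContDiffOn ℝ (⊤ : ℕ∞) (pds A) {x : ℝ × ℝ | 0 < x.1} :=
    contDiffOn_fderiv_apply hA openH (1, 0)
  have hA2 : ContDiffOn ℝ (⊤ : ℕ∞) (pdt A) {x : ℝ × ℝ | 0 < x.1} :=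
    contDiffOn_fderiv_apply hA openH (0, 1)
  have hdLi : DifferentiableAt ℝ (pdi L i) w :=
    diffAt_of_cdOn (contDiffOn_fderiv_apply hL hΩopen _) hΩopen hw
  have hd1c : DifferentiableAt ℝ (fun z => pds A (basept L b σ z)) w :=
    diffAt_of_cdOn (contDiffOn_comp_basept hL hLpos b σ hA1) hΩopen hw
  have hd2c : DifferentiableAt ℝ (fun z => pdt A (basept L b σ z)) w :=
    diffAt_of_cdOn (contDiffOn_comp_basept hL hLpos b σ hA2) hΩopen hw
  rw [pdi_congr_open hΩopen hw (fun z hz => d1_lemma hΩopen hL hLpos hA z hz i) j]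
  rw [pdi_add (F := fun z => pds A (basept L b σ z) * (Real.exp σ * pdi L i z))
      (G := fun z => pdt A (basept L b σ z) * b i)
      (hd1c.mul (hdLi.const_mul _)) (hd2c.mul_const _) j]
  rw [pdi_mul (F := fun z => pds A (basept L b σ z))
      (G := fun z => Real.exp σ * pdi L i z) hd1c (hdLi.const_mul _) j]
  rw [pdi_mul_const (F := fun z => pdt A (basept L b σ z)) hd2c (b i) j]
  rw [pdi_const_mul (F := pdi L i) hdLi (Real.exp σ) j]
  rw [d1_lemma hΩopen hL hLpos hA1 w hw j, d1_lemma hΩopen hL hLpos hA2 w hw j]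

lemma d3_lemma (hΩopen : IsOpen Ω) (hL : ContDiffOn ℝ (⊤ : ℕ∞) L Ω)
    (hLpos : ∀ y ∈ Ω, 0 < L y) {A : ℝ × ℝ → ℝ}
    (hA : ContDiffOn ℝ (⊤ : ℕ∞) A {x : ℝ × ℝ | 0 < x.1}) :
    ∀ y ∈ Ω, ∀ i j k : Fin n,
      pdi (pdi (pdi (fun z => A (basept L b σ z)) i) j) k y
        = ((pds (pds (pds A)) (basept L b σ y) * (Real.exp σ * pdi L k y)
              + pdt (pds (pds A)) (basept L b σ y) * b k) * (Real.exp σ * pdi L j y)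
            + pds (pds A) (basept L b σ y) * (Real.exp σ * pdi (pdi L j) k y)
            + (pds (pdt (pds A)) (basept L b σ y) * (Real.exp σ * pdi L k y)
              + pdt (pdt (pds A)) (basept L b σ y) * b k) * b j) * (Real.exp σ * pdi L i y)
          + (pds (pds A) (basept L b σ y) * (Real.exp σ * pdi L j y)
              + pdt (pds A) (basept L b σ y) * b j) * (Real.exp σ * pdi (pdi L i) k y)
          + (pds (pds A) (basept L b σ y) * (Real.exp σ * pdi L k y)
              + pdt (pds A) (basept L b σ y) * b k) * (Real.exp σ * pdi (pdi L i) j y)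
          + pds A (basept L b σ y) * (Real.exp σ * pdi (pdi (pdi L i) j) k y)
          + ((pds (pds (pdt A)) (basept L b σ y) * (Real.exp σ * pdi L k y)
              + pdt (pds (pdt A)) (basept L b σ y) * b k) * (Real.exp σ * pdi L j y)
            + pds (pdt A) (basept L b σ y) * (Real.exp σ * pdi (pdi L j) k y)
            + (pds (pdt (pdt A)) (basept L b σ y) * (Real.exp σ * pdi L k y)
              + pdt (pdt (pdt A)) (basept L b σ y) * b k) * b j) * b i := by
  intro y hy i j k
  have openH : IsOpen {x : ℝ × ℝ | 0 < x.1} := isOpen_lt continuous_const continuous_fst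
  have hA1 : ContDiffOn ℝ (⊤ : ℕ∞) (pds A) {x : ℝ × ℝ | 0 < x.1} :=
    contDiffOn_fderiv_apply hA openH (1, 0)
  have hA2 : ContDiffOn ℝ (⊤ : ℕ∞) (pdt A) {x : ℝ × ℝ | 0 < x.1} :=
    contDiffOn_fderiv_apply hA openH (0, 1)
  have hA11 : ContDiffOn ℝ (⊤ : ℕ∞) (pds (pds A)) {x : ℝ × ℝ | 0 < x.1} :=
    contDiffOn_fderiv_apply hA1 openH (1, 0)
  have hA12 : ContDiffOn ℝ (⊤ : ℕ∞) (pdt (pds A)) {x : ℝ × ℝ | 0 < x.1} :=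
    contDiffOn_fderiv_apply hA1 openH (0, 1)
  have hA21 : ContDiffOn ℝ (⊤ : ℕ∞) (pds (pdt A)) {x : ℝ × ℝ | 0 < x.1} :=
    contDiffOn_fderiv_apply hA2 openH (1, 0)
  have hA22 : ContDiffOn ℝ (⊤ : ℕ∞) (pdt (pdt A)) {x : ℝ × ℝ | 0 < x.1} :=
    contDiffOn_fderiv_apply hA2 openH (0, 1)
  have hdLi : ∀ (a : Fin n) {w}, w ∈ Ω → DifferentiableAt ℝ (pdi L a) w := fun a {w} hw =>
    diffAt_of_cdOn (contDiffOn_fderiv_apply hL hΩopen _) hΩopen hw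
  have hdLij : ∀ (a c : Fin n) {w}, w ∈ Ω → DifferentiableAt ℝ (pdi (pdi L a) c) w :=
    fun a c {w} hw =>
    diffAt_of_cdOn (contDiffOn_fderiv_apply (contDiffOn_fderiv_apply hL hΩopen _) hΩopen _)
      hΩopen hw
  have hdc : ∀ {B : ℝ × ℝ → ℝ}, ContDiffOn ℝ (⊤ : ℕ∞) B {x : ℝ × ℝ | 0 < x.1} → ∀ {w}, w ∈ Ω →
      DifferentiableAt ℝ (fun z => B (basept L b σ z)) w := fun {B} hB {w} hw =>
    diffAt_of_cdOn (contDiffOn_comp_basept hL hLpos b σ hB) hΩopen hw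
  rw [pdi_congr_open hΩopen hy (fun z hz => d2_lemma hΩopen hL hLpos hA z hz i j) k]
  have dT1 : DifferentiableAt ℝ
      (fun z => pds (pds A) (basept L b σ z) * (Real.exp σ * pdi L j z)
        + pdt (pds A) (basept L b σ z) * b j) y :=
    ((hdc hA11 hy).mul ((hdLi j hy).const_mul _)).add ((hdc hA12 hy).mul_const _)
  have dU : DifferentiableAt ℝ (fun z => Real.exp σ * pdi L i z) y :=
    (hdLi i hy).const_mul _
  have dS1 : DifferentiableAt ℝ
      (fun z => (pds (pds A) (basept L b σ z) * (Real.exp σ * pdi L j z)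
        + pdt (pds A) (basept L b σ z) * b j) * (Real.exp σ * pdi L i z)) y := dT1.mul dU
  have dS2 : DifferentiableAt ℝ
      (fun z => pds A (basept L b σ z) * (Real.exp σ * pdi (pdi L i) j z)) y :=
    (hdc hA1 hy).mul ((hdLij i j hy).const_mul _)
  have dT2 : DifferentiableAt ℝ
      (fun z => pds (pdt A) (basept L b σ z) * (Real.exp σ * pdi L j z)
        + pdt (pdt A) (basept L b σ z) * b j) y :=
    ((hdc hA21 hy).mul ((hdLi j hy).const_mul _)).add ((hdc hA22 hy).mul_const _)
  have dS3 : DifferentiableAt ℝ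
      (fun z => (pds (pdt A) (basept L b σ z) * (Real.exp σ * pdi L j z)
        + pdt (pdt A) (basept L b σ z) * b j) * b i) y := dT2.mul_const _
  rw [pdi_add (F := fun z => (pds (pds A) (basept L b σ z) * (Real.exp σ * pdi L j z)
        + pdt (pds A) (basept L b σ z) * b j) * (Real.exp σ * pdi L i z)
        + pds A (basept L b σ z) * (Real.exp σ * pdi (pdi L i) j z))
      (G := fun z => (pds (pdt A) (basept L b σ z) * (Real.exp σ * pdi L j z)
        + pdt (pdt A) (basept L b σ z) * b j) * b i)
      (dS1.add dS2) dS3 k]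
  rw [pdi_add (F := fun z => (pds (pds A) (basept L b σ z) * (Real.exp σ * pdi L j z)
        + pdt (pds A) (basept L b σ z) * b j) * (Real.exp σ * pdi L i z))
      (G := fun z => pds A (basept L b σ z) * (Real.exp σ * pdi (pdi L i) j z))
      dS1 dS2 k]
  rw [pdi_mul (F := fun z => pds (pds A) (basept L b σ z) * (Real.exp σ * pdi L j z)
        + pdt (pds A) (basept L b σ z) * b j)
      (G := fun z => Real.exp σ * pdi L i z) dT1 dU k]
  rw [pdi_mul (F := fun z => pds A (basept L b σ z))
      (G := fun z => Real.exp σ * pdi (pdi L i) j z) (hdc hA1 hy)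
      ((hdLij i j hy).const_mul _) k]
  rw [pdi_mul_const (F := fun z => pds (pdt A) (basept L b σ z) * (Real.exp σ * pdi L j z)
        + pdt (pdt A) (basept L b σ z) * b j) dT2 (b i) k]
  rw [pdi_add (F := fun z => pds (pds A) (basept L b σ z) * (Real.exp σ * pdi L j z))
      (G := fun z => pdt (pds A) (basept L b σ z) * b j)
      ((hdc hA11 hy).mul ((hdLi j hy).const_mul _)) ((hdc hA12 hy).mul_const _) k]
  rw [pdi_add (F := fun z => pds (pdt A) (basept L b σ z) * (Real.exp σ * pdi L j z))
      (G := fun z => pdt (pdt A) (basept L b σ z) * b j)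
      ((hdc hA21 hy).mul ((hdLi j hy).const_mul _)) ((hdc hA22 hy).mul_const _) k]
  rw [pdi_mul (F := fun z => pds (pds A) (basept L b σ z))
      (G := fun z => Real.exp σ * pdi L j z) (hdc hA11 hy) ((hdLi j hy).const_mul _) k]
  rw [pdi_mul (F := fun z => pds (pdt A) (basept L b σ z))
      (G := fun z => Real.exp σ * pdi L j z) (hdc hA21 hy) ((hdLi j hy).const_mul _) k]
  rw [pdi_mul_const (F := fun z => pdt (pds A) (basept L b σ z)) (hdc hA12 hy) (b j) k]
  rw [pdi_mul_const (F := fun z => pdt (pdt A) (basept L b σ z)) (hdc hA22 hy) (b j) k]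
  rw [pdi_const_mul (F := pdi L i) (hdLi i hy) (Real.exp σ) k]
  rw [pdi_const_mul (F := pdi L j) (hdLi j hy) (Real.exp σ) k]
  rw [pdi_const_mul (F := pdi (pdi L i) j) (hdLij i j hy) (Real.exp σ) k]
  rw [d1_lemma hΩopen hL hLpos hA1 y hy k]
  rw [d1_lemma hΩopen hL hLpos hA11 y hy k]
  rw [d1_lemma hΩopen hL hLpos hA12 y hy k]
  rw [d1_lemma hΩopen hL hLpos hA21 y hy k]
  rw [d1_lemma hΩopen hL hLpos hA22 y hy k]
  ring

end Derivs
set_option maxHeartbeats 4000000 in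
theorem stmt_18
    (n : ℕ) (Ω : Set (Fin n → ℝ)) (hΩopen : IsOpen Ω)
    (hΩ0 : ∀ y ∈ Ω, y ≠ 0)
    (hΩcone : ∀ lam : ℝ, 0 < lam → ∀ y ∈ Ω, lam • y ∈ Ω)
    (L : (Fin n → ℝ) → ℝ)
    (hLsmooth : ContDiffOn ℝ (⊤ : ℕ∞) L Ω)
    (hLpos : ∀ y ∈ Ω, 0 < L y)
    (hLhom : ∀ lam : ℝ, 0 < lam → ∀ y ∈ Ω, L (lam • y) = lam * L y)
    (ginv : (Fin n → ℝ) → Fin n → Fin n → ℝ)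
    (hginv : ∀ y ∈ Ω, ∀ i j : Fin n,
      ∑ r, ginv y i r * gmet L y r j = if i = j then (1 : ℝ) else 0)
    (hginv' : ∀ y ∈ Ω, ∀ i j : Fin n,
      ∑ r, gmet L y i r * ginv y r j = if i = j then (1 : ℝ) else 0)
    (b : Fin n → ℝ) (σ : ℝ)
    (f : ℝ × ℝ → ℝ)
    (hf : ContDiffOn ℝ (⊤ : ℕ∞) f {x : ℝ × ℝ | 0 < x.1})
    (hfpos : ∀ x : ℝ × ℝ, 0 < x.1 → 0 < f x)
    (hfhom : ∀ lam : ℝ, 0 < lam → ∀ x : ℝ × ℝ, 0 < x.1 →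
      f (lam * x.1, lam * x.2) = lam * f x)
    :
    ∀ y ∈ Ω, ∀ i j k : Fin n,
      cartan (Lbar f L b σ) y i j k
        = Real.exp σ * pfun f L b σ y * cartan L y i j k
          + (Real.exp σ * pm1fun f L b σ y / 2) *
              (hmet L y i j * mvec L b y k + hmet L y j k * mvec L b y i
                + hmet L y k i * mvec L b y j)
          + (p02fun f L b σ y / 2) * (mvec L b y i * mvec L b y j * mvec L b y k) := by

  intro y hy i j k
  have openH : IsOpen {x : ℝ × ℝ | 0 < x.1} := isOpen_lt continuous_const continuous_fst
  have hx : basept L b σ y ∈ {x : ℝ × ℝ | 0 < x.1} := by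
    simp only [basept, Set.mem_setOf_eq]
    exact mul_pos (Real.exp_pos σ) (hLpos y hy)
  have hLne : L y ≠ 0 := (hLpos y hy).ne'
  have hfne : f (basept L b σ y) ≠ 0 := (hfpos _ hx).ne'
  have hesne : Real.exp σ ≠ 0 := (Real.exp_pos σ).ne'
  have hdf : ∀ z ∈ {x : ℝ × ℝ | 0 < x.1}, DifferentiableAt ℝ f z := fun z hz =>
    diffAt_of_cdOn hf openH hz
  have hf1cd : ContDiffOn ℝ (⊤ : ℕ∞) (pds f) {x : ℝ × ℝ | 0 < x.1} :=
    contDiffOn_fderiv_apply hf openH (1, 0)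
  have hf2cd : ContDiffOn ℝ (⊤ : ℕ∞) (pdt f) {x : ℝ × ℝ | 0 < x.1} :=
    contDiffOn_fderiv_apply hf openH (0, 1)
  have hf22cd : ContDiffOn ℝ (⊤ : ℕ∞) (pdt (pdt f)) {x : ℝ × ℝ | 0 < x.1} :=
    contDiffOn_fderiv_apply hf2cd openH (0, 1)
  have hG : ContDiffOn ℝ (⊤ : ℕ∞) (Gsq f) {x : ℝ × ℝ | 0 < x.1} := hf.mul hf
  have hG1 : ContDiffOn ℝ (⊤ : ℕ∞) (pds (Gsq f)) {x : ℝ × ℝ | 0 < x.1} :=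
    contDiffOn_fderiv_apply hG openH (1, 0)
  have hG2 : ContDiffOn ℝ (⊤ : ℕ∞) (pdt (Gsq f)) {x : ℝ × ℝ | 0 < x.1} :=
    contDiffOn_fderiv_apply hG openH (0, 1)
  have hG11 : ContDiffOn ℝ (⊤ : ℕ∞) (pds (pds (Gsq f))) {x : ℝ × ℝ | 0 < x.1} :=
    contDiffOn_fderiv_apply hG1 openH (1, 0)
  have hG12 : ContDiffOn ℝ (⊤ : ℕ∞) (pdt (pds (Gsq f))) {x : ℝ × ℝ | 0 < x.1} :=
    contDiffOn_fderiv_apply hG1 openH (0, 1)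
  have hG21 : ContDiffOn ℝ (⊤ : ℕ∞) (pds (pdt (Gsq f))) {x : ℝ × ℝ | 0 < x.1} :=
    contDiffOn_fderiv_apply hG2 openH (1, 0)
  have hG22 : ContDiffOn ℝ (⊤ : ℕ∞) (pdt (pdt (Gsq f))) {x : ℝ × ℝ | 0 < x.1} :=
    contDiffOn_fderiv_apply hG2 openH (0, 1)
  have hdH : ∀ {B : ℝ × ℝ → ℝ}, ContDiffOn ℝ (⊤ : ℕ∞) B {x : ℝ × ℝ | 0 < x.1} →
      ∀ z ∈ {x : ℝ × ℝ | 0 < x.1}, DifferentiableAt ℝ B z := fun {B} hB z hz =>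
    diffAt_of_cdOn hB openH hz
  have hconeH : ∀ lam : ℝ, 0 < lam → ∀ z ∈ {x : ℝ × ℝ | 0 < x.1},
      lam • z ∈ {x : ℝ × ℝ | 0 < x.1} := by
    intro lam hl z hz
    simp only [Set.mem_setOf_eq] at hz ⊢
    have h0 : (lam • z).1 = lam * z.1 := rfl
    rw [h0]; exact mul_pos hl hz
  have hGhom : ∀ lam : ℝ, 0 < lam → ∀ z ∈ {x : ℝ × ℝ | 0 < x.1},
      Gsq f (lam • z) = lam ^ 2 * Gsq f z := by
    intro lam hl z hz
    have h1 : lam • z = (lam * z.1, lam * z.2) := rfl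
    have h2 := hfhom lam hl z hz
    simp only [Gsq, h1, h2]; ring
  have hG1hom : ∀ lam : ℝ, 0 < lam → ∀ z ∈ {x : ℝ × ℝ | 0 < x.1},
      pds (Gsq f) (lam • z) = lam ^ 1 * pds (Gsq f) z := by
    intro lam hl z hz
    have h := hom_fderiv openH (hdH hG) 2 hconeH hGhom hl hz ((1:ℝ), (0:ℝ))
    refine mul_left_cancel₀ hl.ne' ?_
    calc lam * pds (Gsq f) (lam • z) = lam ^ 2 * fderiv ℝ (Gsq f) z (1, 0) := h
      _ = lam * (lam ^ 1 * pds (Gsq f) z) := by rw [pds]; ring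
  have hG2hom : ∀ lam : ℝ, 0 < lam → ∀ z ∈ {x : ℝ × ℝ | 0 < x.1},
      pdt (Gsq f) (lam • z) = lam ^ 1 * pdt (Gsq f) z := by
    intro lam hl z hz
    have h := hom_fderiv openH (hdH hG) 2 hconeH hGhom hl hz ((0:ℝ), (1:ℝ))
    refine mul_left_cancel₀ hl.ne' ?_
    calc lam * pdt (Gsq f) (lam • z) = lam ^ 2 * fderiv ℝ (Gsq f) z (0, 1) := h
      _ = lam * (lam ^ 1 * pdt (Gsq f) z) := by rw [pdt]; ring
  have hA11hom : ∀ lam : ℝ, 0 < lam → ∀ z ∈ {x : ℝ × ℝ | 0 < x.1},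
      pds (pds (Gsq f)) (lam • z) = lam ^ 0 * pds (pds (Gsq f)) z := by
    intro lam hl z hz
    have h := hom_fderiv openH (hdH hG1) 1 hconeH hG1hom hl hz ((1:ℝ), (0:ℝ))
    refine mul_left_cancel₀ hl.ne' ?_
    calc lam * pds (pds (Gsq f)) (lam • z) = lam ^ 1 * fderiv ℝ (pds (Gsq f)) z (1, 0) := h
      _ = lam * (lam ^ 0 * pds (pds (Gsq f)) z) := by rw [pds]; ring
  have hA12hom : ∀ lam : ℝ, 0 < lam → ∀ z ∈ {x : ℝ × ℝ | 0 < x.1},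
      pdt (pds (Gsq f)) (lam • z) = lam ^ 0 * pdt (pds (Gsq f)) z := by
    intro lam hl z hz
    have h := hom_fderiv openH (hdH hG1) 1 hconeH hG1hom hl hz ((0:ℝ), (1:ℝ))
    refine mul_left_cancel₀ hl.ne' ?_
    calc lam * pdt (pds (Gsq f)) (lam • z) = lam ^ 1 * fderiv ℝ (pds (Gsq f)) z (0, 1) := h
      _ = lam * (lam ^ 0 * pdt (pds (Gsq f)) z) := by rw [pdt]; ring
  have hA21hom : ∀ lam : ℝ, 0 < lam → ∀ z ∈ {x : ℝ × ℝ | 0 < x.1},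
      pds (pdt (Gsq f)) (lam • z) = lam ^ 0 * pds (pdt (Gsq f)) z := by
    intro lam hl z hz
    have h := hom_fderiv openH (hdH hG2) 1 hconeH hG2hom hl hz ((1:ℝ), (0:ℝ))
    refine mul_left_cancel₀ hl.ne' ?_
    calc lam * pds (pdt (Gsq f)) (lam • z) = lam ^ 1 * fderiv ℝ (pdt (Gsq f)) z (1, 0) := h
      _ = lam * (lam ^ 0 * pds (pdt (Gsq f)) z) := by rw [pds]; ring
  have hA22hom : ∀ lam : ℝ, 0 < lam → ∀ z ∈ {x : ℝ × ℝ | 0 < x.1},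
      pdt (pdt (Gsq f)) (lam • z) = lam ^ 0 * pdt (pdt (Gsq f)) z := by
    intro lam hl z hz
    have h := hom_fderiv openH (hdH hG2) 1 hconeH hG2hom hl hz ((0:ℝ), (1:ℝ))
    refine mul_left_cancel₀ hl.ne' ?_
    calc lam * pdt (pdt (Gsq f)) (lam • z) = lam ^ 1 * fderiv ℝ (pdt (Gsq f)) z (0, 1) := h
      _ = lam * (lam ^ 0 * pdt (pdt (Gsq f)) z) := by rw [pdt]; ring
  have EU : ∀ (B : ℝ × ℝ → ℝ), (∀ z ∈ {x : ℝ × ℝ | 0 < x.1}, DifferentiableAt ℝ B z) →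
      (∀ lam : ℝ, 0 < lam → ∀ z ∈ {x : ℝ × ℝ | 0 < x.1}, B (lam • z) = lam ^ 0 * B z) →
      (Real.exp σ * L y) * pds B (basept L b σ y)
        + betaf b y * pdt B (basept L b σ y) = 0 := by
    intro B hdB hhom
    have h := euler_deg openH hdB 0 hhom hx
    rw [fderiv_plane_split] at h
    simpa [basept] using h
  have EU11 := EU (pds (pds (Gsq f))) (hdH hG11) hA11hom
  have EU12 := EU (pdt (pds (Gsq f))) (hdH hG12) hA12hom
  have EU21 := EU (pds (pdt (Gsq f))) (hdH hG21) hA21hom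
  have EU22 := EU (pdt (pdt (Gsq f))) (hdH hG22) hA22hom
  have P2a : (Real.exp σ * L y) * pds (pds (Gsq f)) (basept L b σ y)
      + betaf b y * pdt (pds (Gsq f)) (basept L b σ y)
      = pds (Gsq f) (basept L b σ y) := by
    have h := euler_deg openH (hdH hG1) 1 hG1hom hx
    rw [fderiv_plane_split] at h
    simpa [basept] using h
  have SY1 : ∀ z ∈ {x : ℝ × ℝ | 0 < x.1}, pdt (pds (Gsq f)) z = pds (pdt (Gsq f)) z :=
    fun z hz => symm_second openH hG hz (1, 0) (0, 1)
  have SY1' : pdt (pdt (pds (Gsq f))) (basept L b σ y)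
      = pdt (pds (pdt (Gsq f))) (basept L b σ y) :=
    congrArg (fun T : (ℝ × ℝ) →L[ℝ] ℝ => T ((0:ℝ), (1:ℝ))) (fderiv_congr_open openH hx SY1)
  have SY2 : pdt (pds (pds (Gsq f))) (basept L b σ y)
      = pds (pdt (pds (Gsq f))) (basept L b σ y) := symm_second openH hG1 hx (1, 0) (0, 1)
  have SY3 : pdt (pds (pdt (Gsq f))) (basept L b σ y)
      = pds (pdt (pdt (Gsq f))) (basept L b σ y) := symm_second openH hG2 hx (1, 0) (0, 1)
  have SY0 : pds (pdt (Gsq f)) (basept L b σ y) = pdt (pds (Gsq f)) (basept L b σ y) :=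
    (SY1 _ hx).symm
  have e221 : pds (pdt (pdt (Gsq f))) (basept L b σ y)
      = -(betaf b y / (Real.exp σ * L y)) * pdt (pdt (pdt (Gsq f))) (basept L b σ y) := by
    field_simp
    linear_combination EU22
  have e212 : pdt (pds (pdt (Gsq f))) (basept L b σ y)
      = -(betaf b y / (Real.exp σ * L y)) * pdt (pdt (pdt (Gsq f))) (basept L b σ y) :=
    SY3.trans e221
  have e122 : pdt (pdt (pds (Gsq f))) (basept L b σ y)
      = -(betaf b y / (Real.exp σ * L y)) * pdt (pdt (pdt (Gsq f))) (basept L b σ y) :=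
    SY1'.trans e212
  have e121 : pds (pdt (pds (Gsq f))) (basept L b σ y)
      = (betaf b y / (Real.exp σ * L y)) ^ 2 * pdt (pdt (pdt (Gsq f))) (basept L b σ y) := by
    have h := EU12
    rw [e122] at h
    field_simp at h ⊢
    linear_combination h
  have e112 : pdt (pds (pds (Gsq f))) (basept L b σ y)
      = (betaf b y / (Real.exp σ * L y)) ^ 2 * pdt (pdt (pdt (Gsq f))) (basept L b σ y) :=
    SY2.trans e121
  have e111 : pds (pds (pds (Gsq f))) (basept L b σ y)
      = -(betaf b y / (Real.exp σ * L y)) ^ 3 * pdt (pdt (pdt (Gsq f))) (basept L b σ y) := by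
    have h := EU11
    rw [e112] at h
    field_simp at h ⊢
    linear_combination h
  have e211 : pds (pds (pdt (Gsq f))) (basept L b σ y)
      = (betaf b y / (Real.exp σ * L y)) ^ 2 * pdt (pdt (pdt (Gsq f))) (basept L b σ y) := by
    have h := EU21
    rw [e212] at h
    field_simp at h ⊢
    linear_combination h
  have eA11 : pds (pds (Gsq f)) (basept L b σ y)
      = (pds (Gsq f) (basept L b σ y)
          - betaf b y * pdt (pds (Gsq f)) (basept L b σ y)) / (Real.exp σ * L y) := by
    field_simp
    linear_combination P2a
  have hGsH : ∀ z ∈ {x : ℝ × ℝ | 0 < x.1},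
      pds (Gsq f) z = pds f z * f z + f z * pds f z :=
    fun z hz => fderiv_apply_mul (hdf z hz) (hdf z hz) (1, 0)
  have hGtH : ∀ z ∈ {x : ℝ × ℝ | 0 < x.1},
      pdt (Gsq f) z = pdt f z * f z + f z * pdt f z :=
    fun z hz => fderiv_apply_mul (hdf z hz) (hdf z hz) (0, 1)
  have hGsX := hGsH _ hx
  have hA12X : pdt (pds (Gsq f)) (basept L b σ y)
      = (pdt (pds f) (basept L b σ y) * f (basept L b σ y)
          + pds f (basept L b σ y) * pdt f (basept L b σ y))
        + (pdt f (basept L b σ y) * pds f (basept L b σ y)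
          + f (basept L b σ y) * pdt (pds f) (basept L b σ y)) := by
    have hcg : pdt (pds (Gsq f)) (basept L b σ y)
        = pdt (fun z => pds f z * f z + f z * pds f z) (basept L b σ y) :=
      congrArg (fun T : (ℝ × ℝ) →L[ℝ] ℝ => T ((0:ℝ), (1:ℝ)))
        (fderiv_congr_open openH hx hGsH)
    rw [hcg]
    rw [pdt_add (F := fun z => pds f z * f z) (G := fun z => f z * pds f z)
        ((hdH hf1cd _ hx).mul (hdf _ hx)) ((hdf _ hx).mul (hdH hf1cd _ hx))]
    rw [pdt_mul (F := pds f) (G := f) (hdH hf1cd _ hx) (hdf _ hx)]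
    rw [pdt_mul (F := f) (G := pds f) (hdf _ hx) (hdH hf1cd _ hx)]
  have hA22H : ∀ z ∈ {x : ℝ × ℝ | 0 < x.1}, pdt (pdt (Gsq f)) z
      = ((pdt f z) ^ 2 + f z * pdt (pdt f) z) + ((pdt f z) ^ 2 + f z * pdt (pdt f) z) := by
    intro z hz
    have hcg : pdt (pdt (Gsq f)) z = pdt (fun w => pdt f w * f w + f w * pdt f w) z :=
      congrArg (fun T : (ℝ × ℝ) →L[ℝ] ℝ => T ((0:ℝ), (1:ℝ)))
        (fderiv_congr_open openH hz hGtH)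
    rw [hcg]
    rw [pdt_add (F := fun w => pdt f w * f w) (G := fun w => f w * pdt f w)
        ((hdH hf2cd _ hz).mul (hdf _ hz)) ((hdf _ hz).mul (hdH hf2cd _ hz))]
    rw [pdt_mul (F := pdt f) (G := f) (hdH hf2cd _ hz) (hdf _ hz)]
    rw [pdt_mul (F := f) (G := pdt f) (hdf _ hz) (hdH hf2cd _ hz)]
    ring
  have hPX : pdt (pdt (pdt (Gsq f))) (basept L b σ y) = 2 * p02fun f L b σ y := by
    have hcg : pdt (pdt (pdt (Gsq f))) (basept L b σ y)
        = pdt (fun z => ((pdt f z) ^ 2 + f z * pdt (pdt f) z)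
            + ((pdt f z) ^ 2 + f z * pdt (pdt f) z)) (basept L b σ y) :=
      congrArg (fun T : (ℝ × ℝ) →L[ℝ] ℝ => T ((0:ℝ), (1:ℝ)))
        (fderiv_congr_open openH hx hA22H)
    have dP0 : DifferentiableAt ℝ (fun z => (pdt f z) ^ 2 + f z * pdt (pdt f) z)
        (basept L b σ y) :=
      ((hdH hf2cd _ hx).pow 2).add ((hdf _ hx).mul (hdH hf22cd _ hx))
    rw [hcg]
    rw [pdt_add (F := fun z => (pdt f z) ^ 2 + f z * pdt (pdt f) z)
        (G := fun z => (pdt f z) ^ 2 + f z * pdt (pdt f) z) dP0 dP0]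
    have hrfl : pdt (fun x => (pdt f x) ^ 2 + f x * pdt (pdt f) x) (basept L b σ y)
        = p02fun f L b σ y := rfl
    rw [hrfl]; ring
  have hdLat : ∀ {w : Fin n → ℝ}, w ∈ Ω → DifferentiableAt ℝ L w := fun {w} hw =>
    diffAt_of_cdOn hLsmooth hΩopen hw
  have hLicd : ∀ a : Fin n, ContDiffOn ℝ (⊤ : ℕ∞) (pdi L a) Ω := fun a =>
    contDiffOn_fderiv_apply hLsmooth hΩopen _
  have hLijcd : ∀ a c : Fin n, ContDiffOn ℝ (⊤ : ℕ∞) (pdi (pdi L a) c) Ω := fun a c =>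
    contDiffOn_fderiv_apply (hLicd a) hΩopen _
  have hdLiat : ∀ (a : Fin n) {w : Fin n → ℝ}, w ∈ Ω → DifferentiableAt ℝ (pdi L a) w :=
    fun a {w} hw => diffAt_of_cdOn (hLicd a) hΩopen hw
  have hdLijat : ∀ (a c : Fin n) {w : Fin n → ℝ}, w ∈ Ω →
      DifferentiableAt ℝ (pdi (pdi L a) c) w :=
    fun a c {w} hw => diffAt_of_cdOn (hLijcd a c) hΩopen hw
  have hQcd : ContDiffOn ℝ (⊤ : ℕ∞) (fun w => L w * L w) Ω := hLsmooth.mul hLsmooth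
  have hdQ : ∀ w ∈ Ω, DifferentiableAt ℝ (fun z => L z * L z) w := fun w hw =>
    diffAt_of_cdOn hQcd hΩopen hw
  have hQhom : ∀ lam : ℝ, 0 < lam → ∀ w ∈ Ω,
      L (lam • w) * L (lam • w) = lam ^ 2 * (L w * L w) := by
    intro lam hl w hw; rw [hLhom lam hl w hw]; ring
  have hQihom : ∀ (a : Fin n), ∀ lam : ℝ, 0 < lam → ∀ w ∈ Ω,
      pdi (fun z => L z * L z) a (lam • w) = lam ^ 1 * pdi (fun z => L z * L z) a w := by
    intro a lam hl w hw
    have h := hom_fderiv hΩopen hdQ 2 hΩcone hQhom hl hw (Pi.single a 1)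
    refine mul_left_cancel₀ hl.ne' ?_
    calc lam * pdi (fun z => L z * L z) a (lam • w)
        = lam ^ 2 * fderiv ℝ (fun z => L z * L z) w (Pi.single a 1) := h
      _ = lam * (lam ^ 1 * pdi (fun z => L z * L z) a w) := by rw [pdi]; ring
  have hylow : ∀ a : Fin n, ylow L y a = L y * pdi L a y := by
    intro a
    have heuler : fderiv ℝ (pdi (fun z => L z * L z) a) y y
        = 1 * pdi (fun z => L z * L z) a y := by
      have h := euler_deg hΩopen
        (fun w hw => diffAt_of_cdOn (contDiffOn_fderiv_apply hQcd hΩopen _) hΩopen hw)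
        1 (hQihom a) hy
      simp at h ⊢; exact h
    have hsplit := fderiv_pi_split (pdi (fun z => L z * L z) a) y y
    have hmul : pdi (fun z => L z * L z) a y = pdi L a y * L y + L y * pdi L a y :=
      pdi_mul (hdLat hy) (hdLat hy) a
    have hfe : (fun w => L w ^ 2) = fun w => L w * L w := by funext w; ring
    have h2 : ∀ c : Fin n, gmet L y a c
        = (1/2) * pdi (pdi (fun z => L z * L z) a) c y := by
      intro c; simp only [gmet, hfe]
    calc ylow L y a = ∑ c, (1/2) * pdi (pdi (fun z => L z * L z) a) c y * y c := by
          simp only [ylow]; exact Finset.sum_congr rfl fun c _ => by rw [h2 c]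
      _ = (1/2) * ∑ c, y c * pdi (pdi (fun z => L z * L z) a) c y := by
          rw [Finset.mul_sum]; exact Finset.sum_congr rfl fun c _ => by ring
      _ = (1/2) * fderiv ℝ (pdi (fun z => L z * L z) a) y y := by rw [hsplit]
      _ = (1/2) * (1 * (pdi L a y * L y + L y * pdi L a y)) := by rw [heuler, hmul]
      _ = L y * pdi L a y := by ring
  have hmv : ∀ a : Fin n, mvec L b y a = b a - betaf b y / L y * pdi L a y := by
    intro a
    simp only [mvec]
    rw [hylow a]
    field_simp
  have hq1 : ∀ a : Fin n, ∀ w ∈ Ω, pdi (fun z => L z * L z) a w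
      = pdi L a w * L w + L w * pdi L a w :=
    fun a w hw => pdi_mul (hdLat hw) (hdLat hw) a
  have hq2 : ∀ a c : Fin n, ∀ w ∈ Ω, pdi (pdi (fun z => L z * L z) a) c w
      = (pdi (pdi L a) c w * L w + pdi L a w * pdi L c w)
        + (pdi L c w * pdi L a w + L w * pdi (pdi L a) c w) := by
    intro a c w hw
    rw [pdi_congr_open hΩopen hw (hq1 a) c]
    rw [pdi_add (F := fun z => pdi L a z * L z) (G := fun z => L z * pdi L a z)
        ((hdLiat a hw).mul (hdLat hw)) ((hdLat hw).mul (hdLiat a hw)) c]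
    rw [pdi_mul (F := pdi L a) (G := L) (hdLiat a hw) (hdLat hw) c]
    rw [pdi_mul (F := L) (G := pdi L a) (hdLat hw) (hdLiat a hw) c]
  have hq3 : pdi (pdi (pdi (fun z => L z * L z) i) j) k y
      = ((pdi (pdi (pdi L i) j) k y * L y + pdi (pdi L i) j y * pdi L k y)
          + (pdi (pdi L i) k y * pdi L j y + pdi L i y * pdi (pdi L j) k y))
        + ((pdi (pdi L j) k y * pdi L i y + pdi L j y * pdi (pdi L i) k y)
          + (pdi L k y * pdi (pdi L i) j y + L y * pdi (pdi (pdi L i) j) k y)) := by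
    rw [pdi_congr_open hΩopen hy (hq2 i j) k]
    rw [pdi_add (F := fun z => pdi (pdi L i) j z * L z + pdi L i z * pdi L j z)
        (G := fun z => pdi L j z * pdi L i z + L z * pdi (pdi L i) j z)
        (((hdLijat i j hy).mul (hdLat hy)).add ((hdLiat i hy).mul (hdLiat j hy)))
        (((hdLiat j hy).mul (hdLiat i hy)).add ((hdLat hy).mul (hdLijat i j hy))) k]
    rw [pdi_add (F := fun z => pdi (pdi L i) j z * L z)
        (G := fun z => pdi L i z * pdi L j z)
        ((hdLijat i j hy).mul (hdLat hy)) ((hdLiat i hy).mul (hdLiat j hy)) k]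
    rw [pdi_add (F := fun z => pdi L j z * pdi L i z)
        (G := fun z => L z * pdi (pdi L i) j z)
        ((hdLiat j hy).mul (hdLiat i hy)) ((hdLat hy).mul (hdLijat i j hy)) k]
    rw [pdi_mul (F := pdi (pdi L i) j) (G := L) (hdLijat i j hy) (hdLat hy) k]
    rw [pdi_mul (F := pdi L i) (G := pdi L j) (hdLiat i hy) (hdLiat j hy) k]
    rw [pdi_mul (F := pdi L j) (G := pdi L i) (hdLiat j hy) (hdLiat i hy) k]
    rw [pdi_mul (F := L) (G := pdi (pdi L i) j) (hdLat hy) (hdLijat i j hy) k]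
  have hgm : ∀ a c : Fin n, gmet L y a c
      = pdi L a y * pdi L c y + L y * pdi (pdi L a) c y := by
    intro a c
    have hfe : (fun w => L w ^ 2) = fun w => L w * L w := by funext w; ring
    simp only [gmet, hfe]
    rw [hq2 a c y hy]; ring
  have hsymL : pdi (pdi L k) i y = pdi (pdi L i) k y :=
    symm_second hΩopen hLsmooth hy _ _
  have hd3 := d3_lemma (b := b) (σ := σ) hΩopen hLsmooth hLpos hG y hy i j k
  have hLbar : (fun w => Lbar f L b σ w ^ 2) = fun w => Gsq f (basept L b σ w) := by
    funext w; simp only [Lbar, Gsq]; ring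
  have hfe2 : (fun w => L w ^ 2) = fun w => L w * L w := by funext w; ring
  simp only [cartan]
  rw [hLbar, hd3, hfe2, hq3]
  simp only [hmet, lvec]
  rw [hgm i j, hgm j k, hgm k i, hsymL]
  rw [hmv i, hmv j, hmv k]
  simp only [pfun, pm1fun, qm1fun]
  rw [SY0, e111, e112, e121, e122, e211, e212, e221, eA11, hA12X, hPX, hGsX]
  field_simp
  ring
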